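/- For all ξ, η ∈ ℂ and r ∈ ℝ, the point Φ(ξ,η,r) ∈ ℂ × ℝ satisfies: (1) Φ(ξ,η,r) = Φ(ξ,η,0) + r•U(ξ); (2) ⟪Φ(ξ,η,0), U(ξ)⟫ = 0; and (3) ‖U(ξ)‖ = 1. Hence r ↦ Φ(ξ,η,r) is the unit-speed parametrization of the oriented line with direction U(ξ) whose point closest to the origin is Φ(ξ,η,0). -/

import Mathlib

open Complex ComplexConjugate

noncomputable section

/-- The Euclidean inner product on `ℝ³ ≃ ℂ × ℝ`: `⟪(z₁,t₁),(z₂,t₂)⟫ = Re(z₁ conj z₂) + t₁ t₂`. -/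
def inner3 (p q : ℂ × ℝ) : ℝ := (p.1 * conj q.1).re + p.2 * q.2

/-- The Euclidean norm on `ℝ³ ≃ ℂ × ℝ`. -/
def norm3 (p : ℂ × ℝ) : ℝ := Real.sqrt (inner3 p p)

/-- Inverse stereographic projection: the unit direction vector of the oriented line `ξ`. -/
def Udir (ξ : ℂ) : ℂ × ℝ :=
  (2 * ξ / ((1 + Complex.normSq ξ : ℝ) : ℂ),
   (1 - Complex.normSq ξ) / (1 + Complex.normSq ξ))

/-- The map `Φ : 𝕃 × ℝ → ℝ³ ≃ ℂ × ℝ` of the correspondence space. -/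
def Phi (ξ η : ℂ) (r : ℝ) : ℂ × ℝ :=
  ((2 * (η - conj η * ξ ^ 2) + 2 * ξ * ((1 + Complex.normSq ξ : ℝ) : ℂ) * (r : ℂ))
      / (((1 + Complex.normSq ξ) ^ 2 : ℝ) : ℂ),
   ((-2 * (η * conj ξ + conj η * ξ)
        + (((1 - Complex.normSq ξ * Complex.normSq ξ) * r : ℝ) : ℂ))).re
      / (1 + Complex.normSq ξ) ^ 2)

/-! Every claim is a rational identity in `ξ, conj ξ, η, conj η` over powers of the positive
denominator `1 + |ξ|²`, the only relation needed being `ξ * conj ξ = |ξ|²`. Orthogonality holds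
because the two terms of `⟪Φ(ξ,η,0), U(ξ)⟫` are `±4 (1 - |ξ|²) Re(η conj ξ) / (1 + |ξ|²)³`. -/

lemma one_add_normSq_pos (ξ : ℂ) : 0 < 1 + normSq ξ := by
  linarith [normSq_nonneg ξ]

lemma inner3_self (p : ℂ × ℝ) : inner3 p p = normSq p.1 + p.2 ^ 2 := by
  simp [inner3, mul_conj, sq]

lemma inner3_Udir_self (ξ : ℂ) : inner3 (Udir ξ) (Udir ξ) = 1 := by
  have hs := one_add_normSq_pos ξ
  rw [inner3_self]
  simp only [Udir, normSq_div, normSq_mul, normSq_ofReal, normSq_ofNat]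
  field_simp
  ring

lemma norm3_Udir (ξ : ℂ) : norm3 (Udir ξ) = 1 := by
  rw [norm3, inner3_Udir_self, Real.sqrt_one]

lemma Phi_fst_eq (ξ η : ℂ) (r : ℝ) : (Phi ξ η r).1 = (Phi ξ η 0).1 + r * (Udir ξ).1 := by
  have hs : ((1 + normSq ξ : ℝ) : ℂ) ≠ 0 := ofReal_ne_zero.2 (one_add_normSq_pos ξ).ne'
  simp only [Phi, Udir, ofReal_zero, mul_zero, add_zero, ofReal_pow]
  field_simp

lemma Phi_snd_eq (ξ η : ℂ) (r : ℝ) : (Phi ξ η r).2 = (Phi ξ η 0).2 + r * (Udir ξ).2 := by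
  have hs := one_add_normSq_pos ξ
  simp only [Phi, Udir, ofReal_zero, mul_zero, add_zero, add_re, ofReal_re]
  field_simp
  ring

lemma Phi_zero_snd (ξ η : ℂ) : (Phi ξ η 0).2 = -4 * (η * conj ξ).re / (1 + normSq ξ) ^ 2 := by
  simp only [Phi, ofReal_add, ofReal_one, ofReal_zero, mul_zero, add_zero, ofReal_pow, neg_mul,
    neg_re, mul_re, re_ofNat, add_re, conj_re, conj_im, mul_neg, sub_neg_eq_add, im_ofNat, add_im,
    mul_im, zero_mul, sub_zero]
  ring

lemma re_Phi_zero_fst_mul_conj_Udir_fst (ξ η : ℂ) :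
    ((Phi ξ η 0).1 * conj (Udir ξ).1).re
      = 4 * (1 - normSq ξ) * (η * conj ξ).re / (1 + normSq ξ) ^ 3 := by
  have hs : ((1 + normSq ξ : ℝ) : ℂ) ≠ 0 := ofReal_ne_zero.2 (one_add_normSq_pos ξ).ne'
  have key : (Phi ξ η 0).1 * conj (Udir ξ).1
      = 4 * (η * conj ξ - normSq ξ * conj (η * conj ξ)) / ((1 + normSq ξ : ℝ) : ℂ) ^ 3 := by
    simp only [Phi, Udir, ofReal_zero, mul_zero, add_zero, ofReal_pow, map_div₀, map_mul,
      conj_ofReal, map_ofNat, conj_conj]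
    rw [← mul_conj]
    field_simp
    ring
  rw [key, ← ofReal_pow, div_ofReal_re]
  simp only [map_mul, conj_conj, mul_re, re_ofNat, sub_re, conj_re, conj_im, ofReal_re, ofReal_im,
    mul_im, im_ofNat, sub_im, mul_neg, sub_neg_eq_add, neg_mul, zero_mul, sub_zero, add_zero]
  ring

lemma inner3_Phi_zero_Udir (ξ η : ℂ) : inner3 (Phi ξ η 0) (Udir ξ) = 0 := by
  have hs := one_add_normSq_pos ξ
  rw [inner3, re_Phi_zero_fst_mul_conj_Udir_fst, Phi_zero_snd, Udir]
  field_simp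
  ring

/-- `r ↦ Φ(ξ,η,r)` is the unit-speed parametrization of the oriented
line with direction `U(ξ)` whose point closest to the origin is `Φ(ξ,η,0)`. -/
theorem Phi_parametrizes_oriented_lines (ξ η : ℂ) (r : ℝ) :
    Phi ξ η r = Phi ξ η 0 + r • Udir ξ ∧
    inner3 (Phi ξ η 0) (Udir ξ) = 0 ∧
    norm3 (Udir ξ) = 1 :=
  ⟨Prod.ext (by simpa using Phi_fst_eq ξ η r) (Phi_snd_eq ξ η r),
    inner3_Phi_zero_Udir ξ η, norm3_Udir ξ⟩

end
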